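/- Let T > 0, α, λ > 0, and let k(t,s) := α·e^{−λ(t−s)} for 0 ≤ s ≤ t ≤ T. Then for all 0 ≤ s ≤ t ≤ τ ≤ T and every n ≥ 1: (a) κ̇^{n,τ}_{s,t} = e^{−λ(τ−s)} α^n (t−s)^{n−1}/(n−1)!; (b) κ^{n,τ}_{s,t} = e^{−λ(τ−s)} α^n (t−s)^n φ_n(λ(t−s)), where φ_n(δ) := (1/(n−1)!) ∫_0^1 e^{δ(1−u)} u^{n−1} du; (c) for every partition 0 ≤ t_0 < t_1 < ⋯ < t_J ≤ T, all integers n_1,…,n_k ≥ 1 and all indices 0 < i_1 < ⋯ < i_{k+1} ≤ J: μ^{n_1,…,n_k}_{i_1,…,i_{k+1}} = e^{−λ(t_{i_{k+1}} − t_{i_1−1})} · φ_{n_1}(λ(t_{i_1} − t_{i_1−1})) · n_1! · ∏_{l=1}^k (α^{n_l}/n_l!)(t_{i_l} − t_{i_l−1})^{n_l}. -/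

import Mathlib

open MeasureTheory Matrix

noncomputable section

/-- The simplex `Δ^n_{s,t}` of nondecreasing `n`-tuples with values in `[s,t]`. -/
def volSimplex (n : ℕ) (s t : ℝ) : Set (Fin n → ℝ) :=
  {r | (∀ i, r i ∈ Set.Icc s t) ∧ ∀ i j : Fin n, i ≤ j → r i ≤ r j}

/-- `r_{l+1}`, with the convention that `r_{n+1} = τ`. -/
def nxt {n : ℕ} (r : Fin n → ℝ) (τ : ℝ) (l : Fin n) : ℝ :=
  if h : (l : ℕ) + 1 < n then r ⟨(l : ℕ) + 1, h⟩ else τ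

/-- The chain `s = r̃_0, r̃_1 = r_1, …, r̃_n = r_n, r̃_{n+1} = τ`. -/
def chain {n : ℕ} (s τ : ℝ) (r : Fin n → ℝ) : Fin (n + 2) → ℝ := fun i =>
  if h0 : (i : ℕ) = 0 then s
  else if h : (i : ℕ) ≤ n then r ⟨(i : ℕ) - 1, by omega⟩ else τ

/-- `κ^{n,τ}_{s,t}` for the scalar kernel `k`. -/
def kap (k : ℝ → ℝ → ℝ) (n : ℕ) (s t τ : ℝ) : ℝ :=
  ∫ r in volSimplex n s t, ∏ l : Fin n, k (nxt r τ l) (r l)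

/-- `κ̇^{n+1,τ}_{s,t}` for the scalar kernel `k` (superscript `n + 1`). -/
def kapDot (k : ℝ → ℝ → ℝ) (n : ℕ) (s t τ : ℝ) : ℝ :=
  ∫ r in volSimplex n s t,
    ∏ l : Fin (n + 1), k (chain s τ r l.succ) (chain s τ r l.castSucc)

/-- The box `[t_{i₁-1},t_{i₁}] × ⋯ × [t_{i_k-1},t_{i_k}]`. -/
def blockBox (t : ℕ → ℝ) {k : ℕ} (i : Fin k → ℕ) : Set (Fin k → ℝ) :=
  Set.univ.pi fun l => Set.Icc (t (i l - 1)) (t (i l))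

/-- The scalar block weight `μ^{n₁+1,…,n_k+1}_{i₁,…,i_k}` with final time `τ`
(each superscript is `nn l + 1`). -/
def muW (ker : ℝ → ℝ → ℝ) (t : ℕ → ℝ) {k : ℕ} (i : Fin k → ℕ)
    (nn : Fin k → ℕ) (τ : ℝ) : ℝ :=
  ∫ r in blockBox t i, ∏ l, kapDot ker (nn l) (r l) (t (i l)) (nxt r τ l)

/-- `φ_{n+1}(δ) = (1/n!) ∫_0^1 e^{δ(1-u)} u^n du`. -/
def phiAux (n : ℕ) (δ : ℝ) : ℝ :=
  (1 / (Nat.factorial n : ℝ)) * ∫ u in (0:ℝ)..1, Real.exp (δ * (1 - u)) * u ^ n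

open MeasureTheory Matrix

/-- Telescoping sum over `Fin`. -/
lemma tele {m : ℕ} (c : Fin (m + 1) → ℝ) :
    ∑ l : Fin m, (c l.succ - c l.castSucc) = c (Fin.last m) - c 0 := by
  have key : ∀ l : Fin m, c l.succ - c l.castSucc
      = (fun j : ℕ => c ⟨min j m, by omega⟩) ((l : ℕ) + 1)
        - (fun j : ℕ => c ⟨min j m, by omega⟩) (l : ℕ) := by
    intro l
    have h1 : min ((l : ℕ) + 1) m = (l : ℕ) + 1 := Nat.min_eq_left l.2
    have h2 : min (l : ℕ) m = (l : ℕ) := Nat.min_eq_left (le_of_lt l.2)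
    congr 1
    · congr 1; exact Fin.ext (by simp [h1])
    · congr 1; exact Fin.ext (by simp [h2])
  rw [Finset.sum_congr rfl (fun l _ => key l),
    Fin.sum_univ_eq_sum_range (fun j => (fun j : ℕ => c ⟨min j m, by omega⟩) (j+1)
      - (fun j : ℕ => c ⟨min j m, by omega⟩) j) m,
    Finset.sum_range_sub (fun j : ℕ => c ⟨min j m, by omega⟩) m]
  congr 1
  · congr 1; exact Fin.ext (by simp [Fin.last])
/-- `nxt` and `snoc`. -/
lemma nxt_eq_snoc_succ {m : ℕ} (r : Fin (m + 1) → ℝ) (τ : ℝ) (l : Fin (m + 1)) :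
    nxt r τ l = (Fin.snoc r τ : Fin (m+2) → ℝ) l.succ := by
  unfold nxt
  by_cases h : (l : ℕ) + 1 < m + 1
  · have : l.succ = Fin.castSucc ⟨(l : ℕ) + 1, h⟩ := Fin.ext (by simp)
    rw [dif_pos h, this, Fin.snoc_castSucc]
  · have : l.succ = Fin.last (m + 1) := Fin.ext (by simp; omega)
    rw [dif_neg h, this, Fin.snoc_last]

lemma tele_nxt {m : ℕ} (r : Fin (m + 1) → ℝ) (τ : ℝ) :
    ∑ l : Fin (m + 1), (nxt r τ l - r l) = τ - r 0 := by
  have key : ∀ l : Fin (m + 1), nxt r τ l - r l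
      = (Fin.snoc r τ : Fin (m+2) → ℝ) l.succ - (Fin.snoc r τ : Fin (m+2) → ℝ) l.castSucc := by
    intro l; rw [nxt_eq_snoc_succ, Fin.snoc_castSucc]
  rw [Finset.sum_congr rfl (fun l _ => key l), tele (Fin.snoc r τ : Fin (m+2) → ℝ)]
  congr 1
  · exact Fin.snoc_last _ _

lemma chain_zero {n : ℕ} (s τ : ℝ) (r : Fin n → ℝ) : chain s τ r 0 = s := by
  simp [chain]

lemma chain_last {n : ℕ} (s τ : ℝ) (r : Fin n → ℝ) :
    chain s τ r (Fin.last (n + 1)) = τ := by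
  simp [chain, Fin.last]

/-- The kapDot integrand for the exponential kernel is constant. -/
lemma kapDot_integrand_const {n : ℕ} (α lam s t τ : ℝ) (r : Fin n → ℝ) :
    ∏ l : Fin (n + 1), (fun t' s' => α * Real.exp (-lam * (t' - s')))
        (chain s τ r l.succ) (chain s τ r l.castSucc)
      = α ^ (n + 1) * Real.exp (-lam * (τ - s)) := by
  simp only
  rw [Finset.prod_mul_distrib, Finset.prod_const, Finset.card_univ, Fintype.card_fin,
    ← Real.exp_sum]
  congr 1
  rw [show (∑ l : Fin (n+1), -lam * (chain s τ r l.succ - chain s τ r l.castSucc))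
      = -lam * ∑ l : Fin (n+1), (chain s τ r l.succ - chain s τ r l.castSucc) by
    rw [Finset.mul_sum], tele (chain s τ r), chain_zero, chain_last]
lemma prod_exp_nxt {m : ℕ} (lam τ : ℝ) (r : Fin (m + 1) → ℝ) :
    ∏ l : Fin (m + 1), Real.exp (-lam * (nxt r τ l - r l))
      = Real.exp (-lam * (τ - r 0)) := by
  rw [← Real.exp_sum, ← Finset.mul_sum, tele_nxt]

lemma isClosed_volSimplex (n : ℕ) (s t : ℝ) : IsClosed (volSimplex n s t) := by
  have h1 : volSimplex n s t =
      (⋂ i : Fin n, {r : Fin n → ℝ | r i ∈ Set.Icc s t}) ∩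
        ⋂ (i : Fin n) (j : Fin n), {r : Fin n → ℝ | i ≤ j → r i ≤ r j} := by
    ext r; simp [volSimplex, Set.mem_iInter]
  rw [h1]
  refine IsClosed.inter (isClosed_iInter fun i => ?_)
    (isClosed_iInter fun i => isClosed_iInter fun j => ?_)
  · exact IsClosed.preimage (continuous_apply i) isClosed_Icc
  · by_cases hij : i ≤ j
    · simp only [hij, forall_true_left]
      exact isClosed_le (continuous_apply i) (continuous_apply j)
    · have : {r : Fin n → ℝ | i ≤ j → r i ≤ r j} = Set.univ := by
        ext r; simp [hij]
      rw [this]; exact isClosed_univ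

lemma measurableSet_volSimplex (n : ℕ) (s t : ℝ) :
    MeasurableSet (volSimplex n s t) := (isClosed_volSimplex n s t).measurableSet

lemma volSimplex_zero (s t : ℝ) : volSimplex 0 s t = Set.univ := by
  ext r; simp [volSimplex]

lemma cons_mem_volSimplex {n : ℕ} {s t u : ℝ} (hst : s ≤ t) (y : Fin n → ℝ) :
    (Fin.cons u y : Fin (n + 1) → ℝ) ∈ volSimplex (n + 1) s t
      ↔ u ∈ Set.Icc s t ∧ y ∈ volSimplex n u t := by
  constructor
  · rintro ⟨hb, hm⟩
    have hu : u ∈ Set.Icc s t := by simpa using hb 0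
    refine ⟨hu, ⟨fun i => ?_, fun i j hij => ?_⟩⟩
    · constructor
      · have := hm 0 i.succ (Fin.zero_le _)
        simpa using this
      · have := (hb i.succ).2
        simpa using this
    · have := hm i.succ j.succ (Fin.succ_le_succ_iff.mpr hij)
      simpa using this
  · rintro ⟨hu, hb, hm⟩
    refine ⟨fun i => ?_, fun i j hij => ?_⟩
    · refine Fin.cases ?_ (fun i => ?_) i
      · simpa using hu
      · simp only [Fin.cons_succ]
        exact ⟨le_trans hu.1 (hb i).1, (hb i).2⟩
    · revert hij
      refine Fin.cases ?_ (fun i' => ?_) i <;>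
        refine Fin.cases ?_ (fun j' => ?_) j
      · intro _; exact le_refl _
      · intro _; simp only [Fin.cons_zero, Fin.cons_succ]
        exact (hb j').1
      · intro h
        have h2 : (i'.succ : ℕ) ≤ ((0 : Fin (n+1)) : ℕ) := h
        rw [Fin.val_succ, Fin.val_zero] at h2; omega
      · intro h
        simp only [Fin.cons_succ]
        exact hm i' j' (Fin.succ_le_succ_iff.mp h)
open scoped ENNReal
lemma lint_step (n : ℕ) {s t : ℝ} (hst : s ≤ t) (f : ℝ → ℝ≥0∞) (hf : Measurable f) :
    ∫⁻ r in volSimplex (n + 1) s t, f (r 0)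
      = ∫⁻ u in Set.Icc s t, f u * volume (volSimplex n u t) := by
  classical
  set e := MeasurableEquiv.piFinSuccAbove (fun _ : Fin (n + 1) => ℝ) 0 with he_def
  set g : (Fin (n + 1) → ℝ) → ℝ≥0∞ :=
    (volSimplex (n + 1) s t).indicator (fun r => f (r 0)) with hg_def
  have hgmeas : Measurable g :=
    (hf.comp (measurable_pi_apply 0)).indicator (measurableSet_volSimplex _ _ _)
  have h1 : ∫⁻ r in volSimplex (n + 1) s t, f (r 0) = ∫⁻ r, g r :=
    (lintegral_indicator (measurableSet_volSimplex _ _ _) _).symm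
  have mp := (measurePreserving_piFinSuccAbove
    (fun _ : Fin (n + 1) => (volume : Measure ℝ)) 0).symm
  have h2 : ∫⁻ r, g r
      = ∫⁻ p : ℝ × (Fin n → ℝ), g (e.symm p)
          ∂((volume : Measure ℝ).prod (Measure.pi fun _ : Fin n => (volume : Measure ℝ))) := by
    rw [show (volume : Measure (Fin (n+1) → ℝ)) = Measure.pi fun _ => volume from volume_pi]
    exact (mp.lintegral_comp hgmeas).symm
  have key : ∀ (x : ℝ) (y : Fin n → ℝ), g (e.symm (x, y))
      = (Set.Icc s t).indicator
          (fun u => (volSimplex n u t).indicator (fun _ => f u) y) x := by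
    intro x y
    have he : e.symm (x, y) = Fin.cons x y := by
      show (MeasurableEquiv.piFinSuccAbove (fun _ : Fin (n + 1) => ℝ) 0).symm (x, y) = _
      rw [MeasurableEquiv.piFinSuccAbove_symm_apply]
      exact Fin.insertNth_zero' x y
    rw [he]
    by_cases hx : x ∈ Set.Icc s t
    · by_cases hy : y ∈ volSimplex n x t
      · rw [hg_def, Set.indicator_of_mem ((cons_mem_volSimplex hst y).mpr ⟨hx, hy⟩),
          Set.indicator_of_mem hx, Set.indicator_of_mem hy]
        simp
      · rw [hg_def, Set.indicator_of_notMem, Set.indicator_of_mem hx,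
          Set.indicator_of_notMem hy]
        intro hmem; exact hy ((cons_mem_volSimplex hst y).mp hmem).2
    · rw [hg_def, Set.indicator_of_notMem, Set.indicator_of_notMem hx]
      intro hmem; exact hx ((cons_mem_volSimplex hst y).mp hmem).1
  have h3 : ∫⁻ p : ℝ × (Fin n → ℝ), g (e.symm p)
          ∂((volume : Measure ℝ).prod (Measure.pi fun _ : Fin n => (volume : Measure ℝ)))
      = ∫⁻ x : ℝ, ∫⁻ y : Fin n → ℝ, g (e.symm (x, y))
          ∂(Measure.pi fun _ : Fin n => (volume : Measure ℝ)) ∂(volume : Measure ℝ) :=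
    lintegral_prod _ ((hgmeas.comp e.symm.measurable).aemeasurable)
  have h4 : ∀ x : ℝ, ∫⁻ y : Fin n → ℝ, g (e.symm (x, y))
        ∂(Measure.pi fun _ : Fin n => (volume : Measure ℝ))
      = (Set.Icc s t).indicator (fun u => f u * volume (volSimplex n u t)) x := by
    intro x
    simp only [key]
    by_cases hx : x ∈ Set.Icc s t
    · simp only [Set.indicator_of_mem hx]
      rw [show (Measure.pi fun _ : Fin n => (volume : Measure ℝ))
          = (volume : Measure (Fin n → ℝ)) from volume_pi.symm]
      rw [lintegral_indicator (measurableSet_volSimplex _ _ _)]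
      simp [Measure.restrict_apply MeasurableSet.univ, Set.univ_inter]
    · simp only [Set.indicator_of_notMem hx]
      simp
  rw [h1, h2, h3]
  rw [lintegral_congr h4, lintegral_indicator measurableSet_Icc]
lemma pow_int {s t : ℝ} (hst : s ≤ t) (n : ℕ) :
    ∫ u in Set.Icc s t, (t - u) ^ n
      = (t - s) ^ (n + 1) / (n + 1) := by
  rw [MeasureTheory.integral_Icc_eq_integral_Ioc,
    ← intervalIntegral.integral_of_le hst]
  have : ∫ x in s..t, (t - x) ^ n = ∫ x in (t - t)..(t - s), x ^ n :=
    intervalIntegral.integral_comp_sub_left (fun y => y ^ n) t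
  rw [this]
  simp [integral_pow]

lemma volume_volSimplex : ∀ (n : ℕ) {s t : ℝ}, s ≤ t →
    volume (volSimplex n s t)
      = ENNReal.ofReal ((t - s) ^ n / (Nat.factorial n : ℝ)) := by
  intro n
  induction n with
  | zero =>
    intro s t hst
    rw [volSimplex_zero, volume_pi, MeasureTheory.Measure.pi_univ]
    simp
  | succ n ih =>
    intro s t hst
    have h0 : volume (volSimplex (n + 1) s t)
        = ∫⁻ r in volSimplex (n + 1) s t, (fun _ : ℝ => (1 : ℝ≥0∞)) (r 0) := by
      simp
    rw [h0, lint_step n hst _ measurable_const]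
    have h1 : ∫⁻ u in Set.Icc s t, (1 : ℝ≥0∞) * volume (volSimplex n u t)
        = ∫⁻ u in Set.Icc s t, ENNReal.ofReal ((t - u) ^ n / (Nat.factorial n : ℝ)) := by
      refine setLIntegral_congr_fun measurableSet_Icc ?_
      intro u hu
      simp only
      rw [one_mul, ih hu.2]
    rw [h1]
    have h2 : ∫⁻ u in Set.Icc s t, ENNReal.ofReal ((t - u) ^ n / (Nat.factorial n : ℝ))
        = ENNReal.ofReal (∫ u in Set.Icc s t, (t - u) ^ n / (Nat.factorial n : ℝ)) := by
      refine (MeasureTheory.ofReal_integral_eq_lintegral_ofReal ?_ ?_).symm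
      · exact (Continuous.integrableOn_Icc (by continuity))
      · filter_upwards [MeasureTheory.ae_restrict_mem measurableSet_Icc] with u hu
        have h0 : (0:ℝ) ≤ t - u := by linarith [hu.2]
        positivity
    rw [h2]
    have h3 : ∫ u in Set.Icc s t, (t - u) ^ n / (Nat.factorial n : ℝ)
        = (t - s) ^ (n + 1) / (Nat.factorial (n + 1) : ℝ) := by
      have : ∀ u : ℝ, (t - u) ^ n / (Nat.factorial n : ℝ)
          = (1 / (Nat.factorial n : ℝ)) * (t - u) ^ n := by intro u; ring
      simp_rw [this]
      rw [MeasureTheory.integral_const_mul, pow_int hst n, Nat.factorial_succ]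
      have hn : ((n : ℝ) + 1) ≠ 0 := by positivity
      have hfac : (Nat.factorial n : ℝ) ≠ 0 := by
        exact_mod_cast Nat.factorial_ne_zero n
      push_cast
      field_simp
      try ring
      try exact Or.inl trivial
    rw [h3]
lemma marg_real (n : ℕ) {s t : ℝ} (hst : s ≤ t) (f : ℝ → ℝ) (hf : Continuous f)
    (hf0 : ∀ x, 0 ≤ f x) :
    ∫ r in volSimplex (n + 1) s t, f (r 0)
      = ∫ u in Set.Icc s t, f u * ((t - u) ^ n / (Nat.factorial n : ℝ)) := by
  have hL : ∫ r in volSimplex (n + 1) s t, f (r 0)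
      = (∫⁻ r in volSimplex (n + 1) s t, ENNReal.ofReal (f (r 0))).toReal := by
    refine MeasureTheory.integral_eq_lintegral_of_nonneg_ae ?_ ?_
    · filter_upwards with r; exact hf0 _
    · exact (hf.comp (continuous_apply 0)).aestronglyMeasurable
  have hR : ∫ u in Set.Icc s t, f u * ((t - u) ^ n / (Nat.factorial n : ℝ))
      = (∫⁻ u in Set.Icc s t,
          ENNReal.ofReal (f u * ((t - u) ^ n / (Nat.factorial n : ℝ)))).toReal := by
    refine MeasureTheory.integral_eq_lintegral_of_nonneg_ae ?_ ?_
    · filter_upwards [MeasureTheory.ae_restrict_mem measurableSet_Icc] with u hu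
      have h0 : (0:ℝ) ≤ t - u := by linarith [hu.2]
      have := hf0 u
      positivity
    · exact Continuous.aestronglyMeasurable (by continuity)
  rw [hL, hR]
  congr 1
  rw [lint_step n hst (fun u => ENNReal.ofReal (f u)) (ENNReal.measurable_ofReal.comp hf.measurable)]
  refine setLIntegral_congr_fun measurableSet_Icc ?_
  intro u hu
  simp only
  rw [volume_volSimplex n hu.2, ← ENNReal.ofReal_mul (hf0 u)]
lemma phiAux_eq (n : ℕ) (δ : ℝ) :
    phiAux n δ = (1 / (Nat.factorial n : ℝ))
      * (Real.exp δ * ∫ u in (0:ℝ)..1, Real.exp (-δ * u) * u ^ n) := by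
  unfold phiAux
  congr 1
  rw [← intervalIntegral.integral_const_mul]
  refine intervalIntegral.integral_congr fun u _ => ?_
  have h2 : δ * (1 - u) = δ + -δ * u := by ring
  rw [h2, Real.exp_add]
  ring

lemma exp_pow_integral {s t : ℝ} (τ lam : ℝ) (hst : s ≤ t) (n : ℕ) :
    ∫ u in Set.Icc s t, Real.exp (-lam * (τ - u)) * (t - u) ^ n
      = Real.exp (-lam * (τ - s)) * (t - s) ^ (n + 1)
          * (Nat.factorial n : ℝ) * phiAux n (lam * (t - s)) := by
  rcases eq_or_lt_of_le hst with heq | hlt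
  · subst heq
    rw [Set.Icc_self]
    have : ((s - s) ^ (n + 1) : ℝ) = 0 := by simp
    rw [this]
    simp [MeasureTheory.Measure.restrict_singleton]
  · have hne : s - t ≠ 0 := by linarith
    have hfac : (Nat.factorial n : ℝ) ≠ 0 := by exact_mod_cast Nat.factorial_ne_zero n
    set δ := lam * (t - s) with hδ
    set A := ∫ v in (0:ℝ)..1, Real.exp (-δ * v) * v ^ n with hA
    set f : ℝ → ℝ := fun u => Real.exp (-lam * (τ - u)) * (t - u) ^ n with hf
    have key := intervalIntegral.integral_comp_mul_add (a := (0:ℝ)) (b := 1)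
      (f := f) hne t
    have hb1 : (s - t) * 0 + t = t := by ring
    have hb2 : (s - t) * 1 + t = s := by ring
    rw [hb1, hb2] at key
    have hpt : ∀ v : ℝ, f ((s - t) * v + t)
        = (Real.exp (-lam * (τ - t)) * (t - s) ^ n) * (Real.exp (-δ * v) * v ^ n) := by
      intro v
      have h1 : t - ((s - t) * v + t) = (t - s) * v := by ring
      have h2 : -lam * (τ - ((s - t) * v + t)) = -lam * (τ - t) + -δ * v := by
        rw [hδ]; ring
      rw [hf]
      simp only
      rw [h1, mul_pow, h2, Real.exp_add]
      ring
    have hC : ∫ v in (0:ℝ)..1, f ((s - t) * v + t)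
        = (Real.exp (-lam * (τ - t)) * (t - s) ^ n) * A := by
      rw [hA, ← intervalIntegral.integral_const_mul]
      exact intervalIntegral.integral_congr fun v _ => hpt v
    rw [hC, smul_eq_mul] at key
    have hX : ∫ x in t..s, f x
        = (s - t) * ((Real.exp (-lam * (τ - t)) * (t - s) ^ n) * A) :=
      ((inv_mul_eq_iff_eq_mul₀ hne).mp key.symm)
    have hY : ∫ x in s..t, f x
        = (t - s) * ((Real.exp (-lam * (τ - t)) * (t - s) ^ n) * A) := by
      rw [intervalIntegral.integral_symm, hX]; ring
    rw [MeasureTheory.integral_Icc_eq_integral_Ioc,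
      ← intervalIntegral.integral_of_le hst]
    rw [show (∫ u in s..t, Real.exp (-lam * (τ - u)) * (t - u) ^ n) = ∫ x in s..t, f x
      from rfl, hY, phiAux_eq n δ, ← hA]
    have hexp : Real.exp (-lam * (τ - t)) = Real.exp (-lam * (τ - s)) * Real.exp δ := by
      rw [← Real.exp_add]; congr 1; rw [hδ]; ring
    rw [hexp]
    field_simp
    ring
lemma kapDot_exp (α lam : ℝ) {s t : ℝ} (hst : s ≤ t) (τ : ℝ) (n : ℕ) :
    kapDot (fun t' s' => α * Real.exp (-lam * (t' - s'))) n s t τ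
      = Real.exp (-lam * (τ - s)) * α ^ (n + 1) * (t - s) ^ n
          / (Nat.factorial n : ℝ) := by
  unfold kapDot
  simp only [kapDot_integrand_const α lam s t τ]
  rw [MeasureTheory.setIntegral_const, measureReal_def, volume_volSimplex n hst,
    ENNReal.toReal_ofReal (by have h0 : (0:ℝ) ≤ t - s := sub_nonneg.mpr hst; positivity), smul_eq_mul]
  ring

lemma kap_exp {α : ℝ} (hα : 0 < α) (lam : ℝ) {s t : ℝ} (hst : s ≤ t) (τ : ℝ) (n : ℕ) :
    kap (fun t' s' => α * Real.exp (-lam * (t' - s'))) (n + 1) s t τ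
      = Real.exp (-lam * (τ - s)) * α ^ (n + 1) * (t - s) ^ (n + 1)
          * phiAux n (lam * (t - s)) := by
  have hfac : (Nat.factorial n : ℝ) ≠ 0 := by exact_mod_cast Nat.factorial_ne_zero n
  unfold kap
  have hfun : ∀ r : Fin (n + 1) → ℝ,
      (∏ l : Fin (n + 1), (fun t' s' => α * Real.exp (-lam * (t' - s'))) (nxt r τ l) (r l))
        = (fun u => α ^ (n + 1) * Real.exp (-lam * (τ - u))) (r 0) := by
    intro r
    simp only
    rw [Finset.prod_mul_distrib, Finset.prod_const, Finset.card_univ, Fintype.card_fin,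
      prod_exp_nxt lam τ r]
  rw [show (fun r : Fin (n + 1) → ℝ =>
      ∏ l : Fin (n + 1), (fun t' s' => α * Real.exp (-lam * (t' - s'))) (nxt r τ l) (r l))
      = fun r : Fin (n + 1) → ℝ =>
        (fun u => α ^ (n + 1) * Real.exp (-lam * (τ - u))) (r 0) from funext hfun]
  rw [marg_real n hst (fun u => α ^ (n + 1) * Real.exp (-lam * (τ - u)))
    (by continuity) (fun u => by positivity)]
  have hre : ∀ u : ℝ, α ^ (n + 1) * Real.exp (-lam * (τ - u))
        * ((t - u) ^ n / (Nat.factorial n : ℝ))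
      = (α ^ (n + 1) / (Nat.factorial n : ℝ))
          * (Real.exp (-lam * (τ - u)) * (t - u) ^ n) := by
    intro u; ring
  simp_rw [hre]
  rw [MeasureTheory.integral_const_mul, exp_pow_integral τ lam hst n]
  field_simp
lemma setIntegral_pi_prod {k : ℕ} (S : Fin k → Set ℝ) (hS : ∀ l, MeasurableSet (S l))
    (G : Fin k → ℝ → ℝ) :
    ∫ x in Set.univ.pi S, ∏ l, G l (x l) = ∏ l, ∫ u in S l, G l u := by
  rw [← MeasureTheory.integral_indicator (MeasurableSet.univ_pi hS)]
  have hind : (Set.univ.pi S).indicator (fun x => ∏ l, G l (x l))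
      = fun x => ∏ l, (S l).indicator (G l) (x l) := by
    funext x
    by_cases hx : x ∈ Set.univ.pi S
    · rw [Set.indicator_of_mem hx]
      exact Finset.prod_congr rfl fun l _ =>
        (Set.indicator_of_mem (hx l trivial) _).symm
    · rw [Set.indicator_of_notMem hx]
      rw [Set.mem_univ_pi] at hx; push_neg at hx
      obtain ⟨l, hl⟩ := hx
      exact (Finset.prod_eq_zero (Finset.mem_univ l)
        (Set.indicator_of_notMem hl _)).symm
  rw [hind,
    MeasureTheory.integral_fintype_prod_volume_eq_prod (ι := Fin k)
      (fun l => (S l).indicator (G l))]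
  exact Finset.prod_congr rfl fun l _ => MeasureTheory.integral_indicator (hS l)

lemma muW_exp {α lam : ℝ} (hα : 0 < α) (J : ℕ) (t : ℕ → ℝ)
    (hmono : ∀ a c : ℕ, a < c → c ≤ J → t a < t c)
    (K : ℕ) (i : Fin (K + 2) → ℕ) (hi : StrictMono i) (hi0 : 0 < i 0)
    (hiJ : (i (Fin.last (K + 1)) : ℕ) ≤ J) (nn : Fin (K + 1) → ℕ) :
    muW (fun t' s' => α * Real.exp (-lam * (t' - s'))) t
        (fun l => i l.castSucc) nn (t (i (Fin.last (K + 1))))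
      = Real.exp (-lam * (t (i (Fin.last (K + 1))) - t (i 0 - 1)))
          * phiAux (nn 0) (lam * (t (i 0) - t (i 0 - 1)))
          * (Nat.factorial (nn 0 + 1) : ℝ)
          * ∏ l : Fin (K + 1),
              (α ^ (nn l + 1) / (Nat.factorial (nn l + 1) : ℝ))
                * (t (i l.castSucc) - t (i l.castSucc - 1)) ^ (nn l + 1) := by
  classical
  set τ := t (i (Fin.last (K + 1))) with hτ
  set b : Fin (K + 1) → ℝ := fun l => t (i l.castSucc) with hb
  set a : Fin (K + 1) → ℝ := fun l => t (i l.castSucc - 1) with ha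
  have h1le : ∀ l : Fin (K + 1), 1 ≤ i l.castSucc := fun l =>
    le_trans hi0 (hi.monotone (Fin.zero_le _))
  have hleJ : ∀ l : Fin (K + 1), i l.castSucc ≤ J := fun l =>
    le_trans (hi.monotone (Fin.le_last _)) hiJ
  have hab : ∀ l : Fin (K + 1), a l ≤ b l := fun l =>
    (hmono _ _ (by have := h1le l; omega) (hleJ l)).le
  -- the auxiliary one-variable factors
  set G : Fin (K + 1) → ℝ → ℝ := fun l u =>
    (if l = 0 then Real.exp (-lam * (τ - u)) else 1)
      * (α ^ (nn l + 1) * (b l - u) ^ (nn l) / (Nat.factorial (nn l) : ℝ)) with hG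
  -- Step A + B : rewrite the integrand on the box
  have hbox : blockBox t (fun l => i l.castSucc) = Set.univ.pi fun l => Set.Icc (a l) (b l) := rfl
  have stepAB : muW (fun t' s' => α * Real.exp (-lam * (t' - s'))) t
      (fun l => i l.castSucc) nn τ = ∫ r in Set.univ.pi fun l => Set.Icc (a l) (b l),
        ∏ l, G l (r l) := by
    unfold muW
    rw [hbox]
    refine MeasureTheory.setIntegral_congr_fun
      (MeasurableSet.univ_pi fun l => measurableSet_Icc) ?_
    intro r hr
    have h1 : ∀ l : Fin (K + 1),
        kapDot (fun t' s' => α * Real.exp (-lam * (t' - s'))) (nn l) (r l) (b l)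
          (nxt r τ l)
        = Real.exp (-lam * (nxt r τ l - r l))
            * (α ^ (nn l + 1) * (b l - r l) ^ (nn l) / (Nat.factorial (nn l) : ℝ)) := by
      intro l
      rw [kapDot_exp α lam (hr l trivial).2 (nxt r τ l) (nn l)]
      ring
    have h2 : ∏ l, G l (r l)
        = (∏ l : Fin (K + 1), (if l = 0 then Real.exp (-lam * (τ - r l)) else 1))
          * ∏ l, (α ^ (nn l + 1) * (b l - r l) ^ (nn l) / (Nat.factorial (nn l) : ℝ)) := by
      rw [hG, ← Finset.prod_mul_distrib]
    have hz : (∏ l : Fin (K + 1),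
        kapDot (fun t' s' => α * Real.exp (-lam * (t' - s'))) (nn l) (r l) (b l)
          (nxt r τ l)) = ∏ l, G l (r l) := by
      rw [Finset.prod_congr rfl fun l _ => h1 l, Finset.prod_mul_distrib,
        prod_exp_nxt lam τ r, h2, Finset.prod_ite_eq' Finset.univ (0 : Fin (K + 1))
          (fun l => Real.exp (-lam * (τ - r l))), if_pos (Finset.mem_univ _)]
    exact hz
  rw [stepAB, setIntegral_pi_prod _ (fun l => measurableSet_Icc) G]
  -- evaluate the one-dimensional integrals
  have hI0 : ∫ u in Set.Icc (a 0) (b 0), G 0 u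
      = (α ^ (nn 0 + 1) / (Nat.factorial (nn 0) : ℝ))
          * (Real.exp (-lam * (τ - a 0)) * (b 0 - a 0) ^ (nn 0 + 1)
              * (Nat.factorial (nn 0) : ℝ) * phiAux (nn 0) (lam * (b 0 - a 0))) := by
    have : ∀ u : ℝ, G 0 u = (α ^ (nn 0 + 1) / (Nat.factorial (nn 0) : ℝ))
        * (Real.exp (-lam * (τ - u)) * (b 0 - u) ^ (nn 0)) := by
      intro u; rw [hG]; simp only [if_pos, if_true]; ring
    simp_rw [this]
    rw [MeasureTheory.integral_const_mul, exp_pow_integral τ lam (hab 0) (nn 0)]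
  have hIsucc : ∀ m : Fin K, ∫ u in Set.Icc (a m.succ) (b m.succ), G m.succ u
      = (α ^ (nn m.succ + 1) / (Nat.factorial (nn m.succ) : ℝ))
          * ((b m.succ - a m.succ) ^ (nn m.succ + 1) / ((nn m.succ : ℝ) + 1)) := by
    intro m
    have : ∀ u : ℝ, G m.succ u
        = (α ^ (nn m.succ + 1) / (Nat.factorial (nn m.succ) : ℝ)) * (b m.succ - u) ^ (nn m.succ) := by
      intro u; rw [hG]; simp only [if_neg (Fin.succ_ne_zero m)]; ring
    simp_rw [this]
    rw [MeasureTheory.integral_const_mul, pow_int (hab m.succ) (nn m.succ)]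
    try push_cast
    try ring
  rw [Fin.prod_univ_succ (fun l => ∫ u in Set.Icc (a l) (b l), G l u),
    Fin.prod_univ_succ (fun l : Fin (K+1) =>
      (α ^ (nn l + 1) / (Nat.factorial (nn l + 1) : ℝ)) * (b l - a l) ^ (nn l + 1))]
  rw [hI0, Finset.prod_congr rfl fun m _ => hIsucc m]
  have hfac0 : (Nat.factorial (nn 0) : ℝ) ≠ 0 := by
    exact_mod_cast Nat.factorial_ne_zero _
  have hfacs0 : (Nat.factorial (nn 0 + 1) : ℝ) ≠ 0 := by
    exact_mod_cast Nat.factorial_ne_zero _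
  have hhead : (α ^ (nn 0 + 1) / (Nat.factorial (nn 0) : ℝ))
      * (Real.exp (-lam * (τ - a 0)) * (b 0 - a 0) ^ (nn 0 + 1)
          * (Nat.factorial (nn 0) : ℝ) * phiAux (nn 0) (lam * (b 0 - a 0)))
      = (Real.exp (-lam * (τ - a 0)) * phiAux (nn 0) (lam * (b 0 - a 0))
          * (Nat.factorial (nn 0 + 1) : ℝ))
        * ((α ^ (nn 0 + 1) / (Nat.factorial (nn 0 + 1) : ℝ)) * (b 0 - a 0) ^ (nn 0 + 1)) := by
    field_simp
  have htail : ∀ m : Fin K,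
      (α ^ (nn m.succ + 1) / (Nat.factorial (nn m.succ) : ℝ))
          * ((b m.succ - a m.succ) ^ (nn m.succ + 1) / ((nn m.succ : ℝ) + 1))
      = (α ^ (nn m.succ + 1) / (Nat.factorial (nn m.succ + 1) : ℝ))
          * (b m.succ - a m.succ) ^ (nn m.succ + 1) := by
    intro m
    have h1 : (Nat.factorial (nn m.succ) : ℝ) ≠ 0 := by
      exact_mod_cast Nat.factorial_ne_zero _
    have h2 : (Nat.factorial (nn m.succ + 1) : ℝ)
        = ((nn m.succ : ℝ) + 1) * (Nat.factorial (nn m.succ) : ℝ) := by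
      rw [Nat.factorial_succ]; push_cast; ring
    rw [h2]
    have h3 : ((nn m.succ : ℝ) + 1) ≠ 0 := by positivity
    field_simp
    try ring
    try exact Or.inl trivial
  rw [hhead, Finset.prod_congr rfl fun m _ => htail m]
  have ha0 : a 0 = t (i 0 - 1) := by
    rw [ha]; simp only [Fin.castSucc_zero]
  have hb0 : b 0 = t (i 0) := by
    rw [hb]; simp only [Fin.castSucc_zero]
  rw [ha0, hb0]
  ring
/-- Exponential kernel `k(t,s) = α e^{-λ(t-s)}`: closed forms for `κ̇`, `κ`
and the factorized block weights `μ`.  Superscripts `n ≥ 1` are written as `n + 1` with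
`n : ℕ`; likewise `κ̇^{n+1}` is `kapDot k n` and `φ_{n+1} = phiAux n`. -/
theorem stmt5 {T : ℝ} (hT : 0 < T) (α lam : ℝ) (hα : 0 < α) (hlam : 0 < lam) :
    (∀ s t τ : ℝ, 0 ≤ s → s ≤ t → t ≤ τ → τ ≤ T → ∀ n : ℕ,
      kapDot (fun t' s' => α * Real.exp (-lam * (t' - s'))) n s t τ
        = Real.exp (-lam * (τ - s)) * α ^ (n + 1) * (t - s) ^ n
            / (Nat.factorial n : ℝ)) ∧
    (∀ s t τ : ℝ, 0 ≤ s → s ≤ t → t ≤ τ → τ ≤ T → ∀ n : ℕ,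
      kap (fun t' s' => α * Real.exp (-lam * (t' - s'))) (n + 1) s t τ
        = Real.exp (-lam * (τ - s)) * α ^ (n + 1) * (t - s) ^ (n + 1)
            * phiAux n (lam * (t - s))) ∧
    (∀ (J : ℕ) (t : ℕ → ℝ), 0 ≤ t 0 → t J ≤ T →
      (∀ a c : ℕ, a < c → c ≤ J → t a < t c) →
      ∀ (K : ℕ) (i : Fin (K + 2) → ℕ), StrictMono i → 0 < i 0 →
        (i (Fin.last (K + 1)) : ℕ) ≤ J →
      ∀ nn : Fin (K + 1) → ℕ,
        muW (fun t' s' => α * Real.exp (-lam * (t' - s'))) t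
            (fun l => i l.castSucc) nn (t (i (Fin.last (K + 1))))
          = Real.exp (-lam * (t (i (Fin.last (K + 1))) - t (i 0 - 1)))
              * phiAux (nn 0) (lam * (t (i 0) - t (i 0 - 1)))
              * (Nat.factorial (nn 0 + 1) : ℝ)
              * ∏ l : Fin (K + 1),
                  (α ^ (nn l + 1) / (Nat.factorial (nn l + 1) : ℝ))
                    * (t (i l.castSucc) - t (i l.castSucc - 1)) ^ (nn l + 1)) := by
  refine ⟨fun s t τ _ hst _ _ n => kapDot_exp α lam hst τ n,
    fun s t τ _ hst _ _ n => kap_exp hα lam hst τ n,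
    fun J t _ _ hmono K i hi hi0 hiJ nn => muW_exp hα J t hmono K i hi hi0 hiJ nn⟩
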